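/- arXiv:2401.05526 — 3 statements merged into one kernel-verified Lean document; each statement's English description precedes it below -/
import Mathlib

section
/- Let 1 ≤ p < ∞. There exist constants c, C > 0, depending only on p, such that for every Lebesgue-measurable f : (0,∞) → ℝ: c · (∑_{j∈ℤ} 2^{j} (esssup_{t∈Δ_j} |f(t)|)^p)^{1/p} ≤ ‖f‖_{τL_p} ≤ C · (∑_{j∈ℤ} 2^{j} (esssup_{t∈Δ_j} |f(t)|)^p)^{1/p}, as an inequality of values in [0,∞]. -/
open ENNReal MeasureTheory

/-- The Tandori norm `‖f‖_{τL_p} = (∫_0^∞ (esssup_{t≥x} |f(t)|)^p dx)^{1/p}`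
of a function on `(0,∞)`, the essential supremum taken with respect to Lebesgue
measure restricted to `[x,∞)`. -/
noncomputable def TLNorm (p : ℝ) (f : ℝ → ℝ) : ℝ≥0∞ :=
  (∫⁻ x in Set.Ioi (0 : ℝ),
      (essSup (fun t => ENNReal.ofReal |f t|) (volume.restrict (Set.Ici x))) ^ p) ^ (1 / p)

/-- The block form expression
`(∑_{j∈ℤ} 2^j (esssup_{t∈Δ_j} |f(t)|)^p)^{1/p}`, where `Δ_j = [2^j, 2^{j+1})`. -/
noncomputable def TLBlock (p : ℝ) (f : ℝ → ℝ) : ℝ≥0∞ :=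
  (∑' j : ℤ, (2 : ℝ≥0∞) ^ j *
      (essSup (fun t => ENNReal.ofReal |f t|)
        (volume.restrict (Set.Ico ((2 : ℝ) ^ j) ((2 : ℝ) ^ (j + 1))))) ^ p) ^ (1 / p)

/-!
The tail supremum `F(x) = esssup_{t ≥ x} |f t|` is antitone, so on `Δ_j` it lies between the
block supremum `b_{j+1}` of the next block and `F(2^j) = sup_{n ≥ 0} b_{j+n}`. Integrating over
`Δ_j`, which has length `2^j`, and summing over `j` gives
`½ ∑ 2^j b_j^p ≤ ∫ F^p ≤ ∑_j 2^j ∑_{n ≥ 0} b_{j+n}^p = ∑_n 2^{-n} ∑_j 2^j b_j^p = 2 ∑ 2^j b_j^p`.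
Since `1/p ≤ 1`, taking `p`-th roots keeps the constants `½` and `2`.
-/

open Set

noncomputable section

def dyadicInterval (j : ℤ) : Set ℝ := Ico ((2 : ℝ) ^ j) ((2 : ℝ) ^ (j + 1))

lemma volume_dyadicInterval (j : ℤ) : volume (dyadicInterval j) = (2 : ℝ≥0∞) ^ j := by
  rw [dyadicInterval, Real.volume_Ico, zpow_add_one₀ two_ne_zero, mul_two, add_sub_cancel_right,
    ← Real.rpow_intCast, ← ENNReal.rpow_intCast, ← ENNReal.ofReal_ofNat,
    ENNReal.ofReal_rpow_of_pos two_pos]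

lemma pairwise_disjoint_dyadicInterval : Pairwise (Function.onFun Disjoint dyadicInterval) := by
  intro j k hjk
  simp only [Function.onFun, dyadicInterval, Ico_disjoint_Ico]
  rcases hjk.lt_or_gt with h | h
  · exact (min_le_left _ _).trans (le_max_of_le_right (zpow_le_zpow_right₀ one_le_two h))
  · exact (min_le_right _ _).trans (le_max_of_le_left (zpow_le_zpow_right₀ one_le_two h))

lemma iUnion_dyadicInterval : ⋃ j, dyadicInterval j = Ioi 0 := by
  ext x
  simp only [mem_iUnion, dyadicInterval, mem_Ioi]
  refine ⟨fun ⟨j, hj⟩ => (zpow_pos two_pos j).trans_le hj.1, fun hx => ?_⟩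
  exact exists_mem_Ico_zpow hx one_lt_two

lemma Ici_two_zpow_eq_iUnion_dyadicInterval (j : ℤ) :
    Ici ((2 : ℝ) ^ j) = ⋃ n : ℕ, dyadicInterval (j + n) := by
  ext x
  simp only [mem_iUnion, dyadicInterval, mem_Ico, mem_Ici]
  constructor
  · intro hx
    obtain ⟨k, hk, hk'⟩ := exists_mem_Ico_zpow ((zpow_pos two_pos j).trans_le hx) one_lt_two
    have hjk : j ≤ k := by
      by_contra! h
      exact (hx.trans_lt hk').not_ge (zpow_le_zpow_right₀ one_le_two h)
    exact ⟨(k - j).toNat, by rw [show j + ((k - j).toNat : ℤ) = k by omega]; exact ⟨hk, hk'⟩⟩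
  · rintro ⟨n, hn, -⟩
    exact (zpow_le_zpow_right₀ one_le_two (by omega)).trans hn

lemma lintegral_Ioi_zero_eq_tsum_dyadicInterval (φ : ℝ → ℝ≥0∞) :
    ∫⁻ x in Ioi 0, φ x = ∑' j, ∫⁻ x in dyadicInterval j, φ x := by
  rw [← iUnion_dyadicInterval]
  exact lintegral_iUnion (fun _ => measurableSet_Ico) pairwise_disjoint_dyadicInterval φ

lemma essSup_restrict_iUnion_le {α ι : Type*} [MeasurableSpace α] [Countable ι]
    (μ : Measure α) (g : α → ℝ≥0∞) (s : ι → Set α) :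
    essSup g (μ.restrict (⋃ i, s i)) ≤ ⨆ i, essSup g (μ.restrict (s i)) := by
  refine essSup_le_of_ae_le _ ((ae_restrict_iUnion_iff _ _).2 fun i => ?_)
  filter_upwards [ENNReal.ae_le_essSup g] with t ht
  exact ht.trans (le_iSup (fun i => essSup g (μ.restrict (s i))) i)

lemma essSup_restrict_mono {α : Type*} [MeasurableSpace α] {μ : Measure α} (g : α → ℝ≥0∞)
    {s t : Set α} (h : s ⊆ t) : essSup g (μ.restrict s) ≤ essSup g (μ.restrict t) :=
  essSup_mono_measure' (Measure.restrict_mono h le_rfl)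

lemma tsum_zpow_mul_add {c : ℝ≥0∞} (hc₀ : c ≠ 0) (hc : c ≠ ∞) (a : ℤ → ℝ≥0∞) (n : ℤ) :
    ∑' j : ℤ, c ^ j * a (j + n) = c ^ (-n) * ∑' j : ℤ, c ^ j * a j := by
  rw [← ENNReal.tsum_mul_left, ← (Equiv.addRight n).tsum_eq (fun j => c ^ (-n) * (c ^ j * a j))]
  congr 1 with j
  rw [Equiv.coe_addRight, ← mul_assoc, ← ENNReal.zpow_add hc₀ hc, neg_add_cancel_comm_assoc]

lemma tsum_two_zpow_neg_natCast : ∑' n : ℕ, (2 : ℝ≥0∞) ^ (-(n : ℤ)) = 2 := by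
  have h (n : ℕ) : (2 : ℝ≥0∞) ^ (-(n : ℤ)) = 2⁻¹ ^ n := by
    rw [ENNReal.zpow_neg, zpow_natCast, ENNReal.inv_pow]
  rw [tsum_congr h, ENNReal.tsum_geometric, ENNReal.one_sub_inv_two, inv_inv]

section Blocks

variable (g : ℝ → ℝ≥0∞)

def blockSup (j : ℤ) : ℝ≥0∞ := essSup g (volume.restrict (dyadicInterval j))

def tailSup (x : ℝ) : ℝ≥0∞ := essSup g (volume.restrict (Ici x))

def blockSum (p : ℝ) : ℝ≥0∞ := ∑' j : ℤ, (2 : ℝ≥0∞) ^ j * blockSup g j ^ p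

lemma blockSup_le_tailSup {j : ℤ} {x : ℝ} (hx : x ≤ 2 ^ j) : blockSup g j ≤ tailSup g x :=
  essSup_restrict_mono g fun _ ht => hx.trans ht.1

lemma tailSup_two_zpow_le_iSup_blockSup (j : ℤ) :
    tailSup g (2 ^ j) ≤ ⨆ n : ℕ, blockSup g (j + n) := by
  rw [tailSup, Ici_two_zpow_eq_iUnion_dyadicInterval]
  exact essSup_restrict_iUnion_le _ _ _

lemma two_zpow_mul_blockSup_succ_rpow_le_setLIntegral {p : ℝ} (hp : 0 ≤ p) (j : ℤ) :
    (2 : ℝ≥0∞) ^ j * blockSup g (j + 1) ^ p ≤ ∫⁻ x in dyadicInterval j, tailSup g x ^ p := by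
  calc (2 : ℝ≥0∞) ^ j * blockSup g (j + 1) ^ p
      = ∫⁻ _ in dyadicInterval j, blockSup g (j + 1) ^ p := by
        rw [setLIntegral_const, volume_dyadicInterval, mul_comm]
    _ ≤ ∫⁻ x in dyadicInterval j, tailSup g x ^ p :=
        setLIntegral_mono_ae' measurableSet_Ico <| .of_forall fun x hx =>
          ENNReal.rpow_le_rpow (blockSup_le_tailSup g hx.2.le) hp

lemma setLIntegral_tailSup_rpow_le {p : ℝ} (hp : 0 < p) (j : ℤ) :
    ∫⁻ x in dyadicInterval j, tailSup g x ^ p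
      ≤ (2 : ℝ≥0∞) ^ j * ∑' n : ℕ, blockSup g (j + n) ^ p := by
  have htail : tailSup g (2 ^ j) ^ p ≤ ∑' n : ℕ, blockSup g (j + n) ^ p :=
    calc tailSup g (2 ^ j) ^ p
        ≤ (⨆ n : ℕ, blockSup g (j + n)) ^ p :=
          ENNReal.rpow_le_rpow (tailSup_two_zpow_le_iSup_blockSup g j) hp.le
      _ = ⨆ n : ℕ, blockSup g (j + n) ^ p := (ENNReal.orderIsoRpow p hp).map_iSup _
      _ ≤ ∑' n : ℕ, blockSup g (j + n) ^ p := iSup_le fun n => ENNReal.le_tsum n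
  calc ∫⁻ x in dyadicInterval j, tailSup g x ^ p
      ≤ ∫⁻ _ in dyadicInterval j, tailSup g (2 ^ j) ^ p :=
        setLIntegral_mono_ae' measurableSet_Ico <| .of_forall fun x hx =>
          ENNReal.rpow_le_rpow (essSup_restrict_mono g (Ici_subset_Ici.2 hx.1)) hp.le
    _ = (2 : ℝ≥0∞) ^ j * tailSup g (2 ^ j) ^ p := by
        rw [setLIntegral_const, volume_dyadicInterval, mul_comm]
    _ ≤ (2 : ℝ≥0∞) ^ j * ∑' n : ℕ, blockSup g (j + n) ^ p := mul_le_mul_right htail _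

lemma inv_two_mul_blockSum_le_lintegral {p : ℝ} (hp : 0 ≤ p) :
    2⁻¹ * blockSum g p ≤ ∫⁻ x in Ioi 0, tailSup g x ^ p :=
  calc 2⁻¹ * blockSum g p = ∑' j : ℤ, (2 : ℝ≥0∞) ^ j * blockSup g (j + 1) ^ p := by
        rw [blockSum, tsum_zpow_mul_add two_ne_zero ENNReal.ofNat_ne_top (blockSup g · ^ p),
          zpow_neg_one]
    _ ≤ ∑' j, ∫⁻ x in dyadicInterval j, tailSup g x ^ p :=
        ENNReal.tsum_le_tsum (two_zpow_mul_blockSup_succ_rpow_le_setLIntegral g hp)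
    _ = ∫⁻ x in Ioi 0, tailSup g x ^ p := (lintegral_Ioi_zero_eq_tsum_dyadicInterval _).symm

lemma lintegral_le_two_mul_blockSum {p : ℝ} (hp : 0 < p) :
    ∫⁻ x in Ioi 0, tailSup g x ^ p ≤ 2 * blockSum g p :=
  calc ∫⁻ x in Ioi 0, tailSup g x ^ p
      ≤ ∑' j : ℤ, (2 : ℝ≥0∞) ^ j * ∑' n : ℕ, blockSup g (j + n) ^ p := by
        rw [lintegral_Ioi_zero_eq_tsum_dyadicInterval]
        exact ENNReal.tsum_le_tsum (setLIntegral_tailSup_rpow_le g hp)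
    _ = ∑' n : ℕ, ∑' j : ℤ, (2 : ℝ≥0∞) ^ j * blockSup g (j + n) ^ p := by
        simp_rw [← ENNReal.tsum_mul_left]
        exact ENNReal.tsum_comm
    _ = ∑' n : ℕ, (2 : ℝ≥0∞) ^ (-(n : ℤ)) * blockSum g p := by
        simp_rw [tsum_zpow_mul_add two_ne_zero ENNReal.ofNat_ne_top (blockSup g · ^ p)]
        rfl
    _ = 2 * blockSum g p := by rw [ENNReal.tsum_mul_right, tsum_two_zpow_neg_natCast]

end Blocks

lemma mul_rpow_le_of_one_le {a : ℝ≥0∞} (ha : 1 ≤ a) {q : ℝ} (hq₀ : 0 ≤ q) (hq₁ : q ≤ 1)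
    (x : ℝ≥0∞) : (a * x) ^ q ≤ a * x ^ q := by
  rw [ENNReal.mul_rpow_of_nonneg _ _ hq₀]
  gcongr
  simpa using ENNReal.rpow_le_rpow_of_exponent_le ha hq₁

lemma le_mul_rpow_of_le_one {a : ℝ≥0∞} (ha : a ≤ 1) {q : ℝ} (hq₀ : 0 ≤ q) (hq₁ : q ≤ 1)
    (x : ℝ≥0∞) : a * x ^ q ≤ (a * x) ^ q := by
  rw [ENNReal.mul_rpow_of_nonneg _ _ hq₀]
  gcongr
  simpa using ENNReal.rpow_le_rpow_of_exponent_ge ha hq₁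

end

/-- Block form representation of the Tandori function space built on `L_p`. -/
theorem stmt_4 (p : ℝ) (hp : 1 ≤ p) :
    ∃ c C : ℝ, 0 < c ∧ 0 < C ∧ ∀ f : ℝ → ℝ, Measurable f →
      ENNReal.ofReal c * TLBlock p f ≤ TLNorm p f ∧
        TLNorm p f ≤ ENNReal.ofReal C * TLBlock p f := by
  have hp₀ : 0 < p := one_pos.trans_le hp
  have hq₀ : 0 ≤ 1 / p := by positivity
  have hq₁ : 1 / p ≤ 1 := (div_le_one hp₀).2 hp
  refine ⟨1 / 2, 2, by norm_num, by norm_num, fun f _ => ?_⟩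
  set g : ℝ → ℝ≥0∞ := fun t => ENNReal.ofReal |f t|
  have hBlock : TLBlock p f = blockSum g p ^ (1 / p) := rfl
  have hNorm : TLNorm p f = (∫⁻ x in Ioi 0, tailSup g x ^ p) ^ (1 / p) := rfl
  rw [hBlock, hNorm, one_div 2, ENNReal.ofReal_inv_of_pos two_pos, ENNReal.ofReal_ofNat]
  constructor
  · calc 2⁻¹ * blockSum g p ^ (1 / p) ≤ (2⁻¹ * blockSum g p) ^ (1 / p) :=
          le_mul_rpow_of_le_one (by norm_num) hq₀ hq₁ _
      _ ≤ (∫⁻ x in Ioi 0, tailSup g x ^ p) ^ (1 / p) :=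
          ENNReal.rpow_le_rpow (inv_two_mul_blockSum_le_lintegral g hp₀.le) hq₀
  · calc (∫⁻ x in Ioi 0, tailSup g x ^ p) ^ (1 / p) ≤ (2 * blockSum g p) ^ (1 / p) :=
          ENNReal.rpow_le_rpow (lintegral_le_two_mul_blockSum g hp₀) hq₀
      _ ≤ 2 * blockSum g p ^ (1 / p) := mul_rpow_le_of_one_le one_le_two hq₀ hq₁ _
end

section
/- Let 1 < p < ∞ and let q satisfy 1/p + 1/q = 1. There exist constants c, C > 0, depending only on p, such that for every Lebesgue-measurable g : (0,∞) → ℝ: c · ‖g‖_{G_q} ≤ sup{ ‖g·f‖_{Ces_p} : f Lebesgue-measurable with ‖f‖_{L_p} ≤ 1 } ≤ C · ‖g‖_{G_q}, where g·f denotes the pointwise product and all quantities take values in [0,∞]. -/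
open ENNReal MeasureTheory

/-- The `L_p(0,∞)` norm `‖f‖_{L_p} = (∫_0^∞ |f(t)|^p dt)^{1/p}`. -/
noncomputable def LpNorm (p : ℝ) (f : ℝ → ℝ) : ℝ≥0∞ :=
  (∫⁻ t in Set.Ioi (0 : ℝ), ENNReal.ofReal |f t| ^ p) ^ (1 / p)

/-- The Cesàro norm `‖f‖_{Ces_p} = (∫_0^∞ ((1/x)∫_0^x |f(t)| dt)^p dx)^{1/p}`. -/
noncomputable def CesNorm (p : ℝ) (f : ℝ → ℝ) : ℝ≥0∞ :=
  (∫⁻ x in Set.Ioi (0 : ℝ),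
      ((ENNReal.ofReal x)⁻¹ * ∫⁻ t in Set.Ioc (0 : ℝ) x, ENNReal.ofReal |f t|) ^ p) ^ (1 / p)

/-- The norm `‖f‖_{G_q} = sup_{x>0} ((1/x)∫_0^x |f(t)|^q dt)^{1/q}`. -/
noncomputable def GNorm (q : ℝ) (f : ℝ → ℝ) : ℝ≥0∞ :=
  ⨆ (x : ℝ) (_ : 0 < x),
    ((ENNReal.ofReal x)⁻¹ * ∫⁻ t in Set.Ioc (0 : ℝ) x, ENNReal.ofReal |f t| ^ q) ^ (1 / q)

/-!
Upper bound: split `|g f| = (|f| t ^ ε) (|g| t ^ (-ε))` with `ε = 1 / (2q)` and apply Hölder on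
`(0, x]`. The `G_q` condition controls the weighted integral
`∫_0^x |g|^q t^(-1/2) dt ≤ 2 ‖g‖_{G_q}^q x^(1/2)` (write `t^(-1/2)` as a tail integral and use
Fubini). After integrating in `x`, Fubini again shows that the weight `t^((p-1)/2)` left on `|f|^p`
is exactly cancelled by `∫_t^∞ x^(-(p+1)/2) dx`, so
`‖g f‖_{Ces_p} ≤ 2 (p-1)^(-1/p) ‖g‖_{G_q} ‖f‖_{L_p}`.

Lower bound: for `x > 0` test against the extremal function of Hölder's inequality,
`f = u^(q-1) / ‖u‖_{L_q(0,x)}^(q/p)` on `(0, x]` with `u = min (|g|, n)`. The Cesàro average on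
`(x, 2x]` is at least `(2x)⁻¹ ∫_0^x |g f|`, which gives `½ ((1/x) ∫_0^x u^q)^(1/q)`; let `n → ∞`.
-/

open Set

lemma lintegral_Ioc_zero_ofReal_rpow {r : ℝ} (hr : -1 < r) {x : ℝ} (hx : 0 < x) :
    ∫⁻ s in Ioc 0 x, ENNReal.ofReal (s ^ r) = ENNReal.ofReal (x ^ (r + 1) / (r + 1)) := by
  have hint : IntegrableOn (fun s : ℝ => s ^ r) (Ioc 0 x) :=
    (intervalIntegrable_iff_integrableOn_Ioc_of_le hx.le).mp
      (intervalIntegral.intervalIntegrable_rpow' hr)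
  rw [← ofReal_integral_eq_lintegral_ofReal hint
      ((ae_restrict_mem measurableSet_Ioc).mono fun s hs => Real.rpow_nonneg hs.1.le _),
    ← intervalIntegral.integral_of_le hx.le, integral_rpow (Or.inl hr),
    Real.zero_rpow (by linarith), sub_zero]

lemma lintegral_Ioi_ofReal_rpow {r : ℝ} (hr : r < -1) {t : ℝ} (ht : 0 < t) :
    ∫⁻ s in Ioi t, ENNReal.ofReal (s ^ r) = ENNReal.ofReal (-t ^ (r + 1) / (r + 1)) := by
  rw [← ofReal_integral_eq_lintegral_ofReal (integrableOn_Ioi_rpow_of_lt hr ht)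
      ((ae_restrict_mem measurableSet_Ioi).mono fun s hs => Real.rpow_nonneg (ht.trans hs).le _),
    integral_Ioi_rpow_of_lt hr ht]

lemma lintegral_mul_lintegral_Ioi_comm {ψ φ : ℝ → ℝ≥0∞} (hψ : Measurable ψ)
    (hφ : Measurable φ) :
    ∫⁻ t in Ioi 0, ψ t * ∫⁻ s in Ioi t, φ s = ∫⁻ s in Ioi 0, φ s * ∫⁻ t in Ioc 0 s, ψ t := by
  set F : ℝ → ℝ → ℝ≥0∞ := fun t s => (Ioi t).indicator (fun s => ψ t * φ s) s
  have hF : Measurable (Function.uncurry F) :=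
    ((hψ.comp measurable_fst).mul (hφ.comp measurable_snd)).indicator
      (measurableSet_lt measurable_fst measurable_snd)
  calc ∫⁻ t in Ioi 0, ψ t * ∫⁻ s in Ioi t, φ s
      = ∫⁻ t in Ioi 0, ∫⁻ s in Ioi 0, F t s := by
        refine setLIntegral_congr_fun measurableSet_Ioi fun t ht => ?_
        rw [setLIntegral_indicator measurableSet_Ioi,
          inter_eq_left.mpr (Ioi_subset_Ioi (le_of_lt ht)), lintegral_const_mul _ hφ]
    _ = ∫⁻ s in Ioi 0, ∫⁻ t in Ioi 0, F t s := lintegral_lintegral_swap hF.aemeasurable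
    _ = ∫⁻ s in Ioi 0, φ s * ∫⁻ t in Ioc 0 s, ψ t := by
        refine setLIntegral_congr_fun measurableSet_Ioi fun s _ => ?_
        have hF' : (fun t => F t s) = (Iio s).indicator (fun t => ψ t * φ s) := by
          ext t; simp [F, indicator]
        rw [hF', setLIntegral_indicator measurableSet_Iio, Iio_inter_Ioi,
          restrict_Ioo_eq_restrict_Ioc, lintegral_mul_const _ hψ, mul_comm]

lemma lintegral_Ioi_rpow_mul_min {α : ℝ} (hα0 : 0 < α) (hα1 : α < 1) {x : ℝ} (hx : 0 < x) :
    ∫⁻ s in Ioi 0, ENNReal.ofReal (s ^ (-α - 1) * min x s) =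
      ENNReal.ofReal (x ^ (1 - α) / (α * (1 - α))) := by
  have below : ∫⁻ s in Ioc 0 x, ENNReal.ofReal (s ^ (-α - 1) * min x s) =
      ENNReal.ofReal (x ^ (1 - α) / (1 - α)) := by
    rw [setLIntegral_congr_fun measurableSet_Ioc fun s hs => by
        rw [min_eq_right hs.2, ← Real.rpow_add_one hs.1.ne', show -α - 1 + 1 = -α by ring],
      lintegral_Ioc_zero_ofReal_rpow (by linarith) hx, show -α + 1 = 1 - α by ring]
  have above : ∫⁻ s in Ioi x, ENNReal.ofReal (s ^ (-α - 1) * min x s) =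
      ENNReal.ofReal (x ^ (1 - α) / α) := by
    rw [setLIntegral_congr_fun measurableSet_Ioi fun s hs => by
        rw [min_eq_left (le_of_lt hs), ENNReal.ofReal_mul (Real.rpow_nonneg (hx.trans hs).le _)],
      lintegral_mul_const' _ _ ENNReal.ofReal_ne_top, lintegral_Ioi_ofReal_rpow (by linarith) hx,
      ← ENNReal.ofReal_mul (by rw [show -α - 1 + 1 = -α by ring, neg_div_neg_eq]; positivity)]
    congr 1
    rw [show -α - 1 + 1 = -α by ring, neg_div_neg_eq, div_mul_eq_mul_div,
      ← Real.rpow_add_one hx.ne', show -α + 1 = 1 - α by ring]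
  rw [← Ioc_union_Ioi_eq_Ioi hx.le, lintegral_union measurableSet_Ioi (Ioc_disjoint_Ioi le_rfl),
    below, above, ← ENNReal.ofReal_add (by positivity) (by positivity)]
  congr 1
  have : 1 - α ≠ 0 := by linarith
  field_simp
  ring

lemma lintegral_Ioc_mul_rpow_neg_le {ψ : ℝ → ℝ≥0∞} (hψ : Measurable ψ) {M : ℝ≥0∞}
    (hM : ∀ y, 0 < y → ∫⁻ t in Ioc 0 y, ψ t ≤ ENNReal.ofReal y * M)
    {α : ℝ} (hα0 : 0 < α) (hα1 : α < 1) {x : ℝ} (hx : 0 < x) :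
    ∫⁻ t in Ioc 0 x, ψ t * ENNReal.ofReal (t ^ (-α)) ≤
      ENNReal.ofReal (x ^ (1 - α) / (1 - α)) * M := by
  let ψx := (Ioc 0 x).indicator ψ
  set φ : ℝ → ℝ≥0∞ := fun s => ENNReal.ofReal (s ^ (-α - 1))
  have hφ : Measurable φ := by fun_prop
  -- `t ^ (-α) = α * ∫_t^∞ s ^ (-α - 1) ds` turns the weight into an iterated integral
  have weight : ∀ t ∈ Ioi (0 : ℝ),
      ψx t * ENNReal.ofReal (t ^ (-α)) = ENNReal.ofReal α * (ψx t * ∫⁻ s in Ioi t, φ s) := by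
    intro t ht
    rw [lintegral_Ioi_ofReal_rpow (by linarith) ht, show -α - 1 + 1 = -α by ring, neg_div_neg_eq,
      mul_left_comm, ← ENNReal.ofReal_mul hα0.le, mul_div_cancel₀ _ hα0.ne']
  have inner : ∀ s ∈ Ioi (0 : ℝ), φ s * ∫⁻ t in Ioc 0 s, ψx t ≤
      ENNReal.ofReal (s ^ (-α - 1) * min x s) * M := by
    intro s hs
    rw [setLIntegral_indicator measurableSet_Ioc, Ioc_inter_Ioc, max_self,
      ENNReal.ofReal_mul (Real.rpow_nonneg (le_of_lt hs) _), mul_assoc]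
    gcongr
    exact hM _ (lt_min hx hs)
  calc ∫⁻ t in Ioc 0 x, ψ t * ENNReal.ofReal (t ^ (-α))
      = ∫⁻ t in Ioi 0, ψx t * ENNReal.ofReal (t ^ (-α)) := by
        rw [← inter_eq_left.mpr (Ioc_subset_Ioi_self : Ioc 0 x ⊆ Ioi 0),
          ← setLIntegral_indicator measurableSet_Ioc]
        simp only [ψx, indicator_mul_left]
    _ = ENNReal.ofReal α * ∫⁻ s in Ioi 0, φ s * ∫⁻ t in Ioc 0 s, ψx t := by
        rw [setLIntegral_congr_fun measurableSet_Ioi weight,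
          lintegral_const_mul' _ _ ENNReal.ofReal_ne_top,
          lintegral_mul_lintegral_Ioi_comm (hψ.indicator measurableSet_Ioc) hφ]
    _ ≤ ENNReal.ofReal α * ∫⁻ s in Ioi 0, ENNReal.ofReal (s ^ (-α - 1) * min x s) * M := by
        gcongr ENNReal.ofReal α * ?_
        exact setLIntegral_mono' measurableSet_Ioi inner
    _ = ENNReal.ofReal (x ^ (1 - α) / (1 - α)) * M := by
        rw [lintegral_mul_const _ (by fun_prop), lintegral_Ioi_rpow_mul_min hα0 hα1 hx,
          ← mul_assoc, ← ENNReal.ofReal_mul hα0.le]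
        congr 2
        field_simp

lemma lintegral_Ioc_rpow_le_GNorm (g : ℝ → ℝ) {q : ℝ} (hq : 0 < q) {y : ℝ} (hy : 0 < y) :
    ∫⁻ t in Ioc 0 y, ENNReal.ofReal |g t| ^ q ≤ ENNReal.ofReal y * GNorm q g ^ q := by
  have hy' : ENNReal.ofReal y ≠ 0 := by simpa using hy
  have avg : ((ENNReal.ofReal y)⁻¹ * ∫⁻ t in Ioc 0 y, ENNReal.ofReal |g t| ^ q) ^ (1 / q) ≤
      GNorm q g := le_iSup₂_of_le (f := fun x (_ : 0 < x) => _) y hy le_rfl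
  rwa [one_div, ENNReal.rpow_inv_le_iff hq, ENNReal.inv_mul_le_iff hy' ENNReal.ofReal_ne_top]
    at avg

lemma lintegral_Ioc_weighted_holder {p q : ℝ} (hpq : p.HolderConjugate q) {f g : ℝ → ℝ}
    (hf : Measurable f) (hg : Measurable g) (ε : ℝ) (x : ℝ) :
    ∫⁻ t in Ioc 0 x, ENNReal.ofReal |g t * f t| ≤
      (∫⁻ t in Ioc 0 x, ENNReal.ofReal |f t| ^ p * ENNReal.ofReal (t ^ (ε * p))) ^ (1 / p) *
      (∫⁻ t in Ioc 0 x, ENNReal.ofReal |g t| ^ q * ENNReal.ofReal (t ^ (-ε * q))) ^ (1 / q) := by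
  set F : ℝ → ℝ≥0∞ := fun t => ENNReal.ofReal |f t| * ENNReal.ofReal (t ^ ε)
  set G : ℝ → ℝ≥0∞ := fun t => ENNReal.ofReal |g t| * ENNReal.ofReal (t ^ (-ε))
  have hpow : ∀ {r : ℝ}, 0 < r → ∀ (a : ℝ) {t : ℝ}, 0 < t → ∀ δ : ℝ,
      (ENNReal.ofReal |a| * ENNReal.ofReal (t ^ δ)) ^ r =
        ENNReal.ofReal |a| ^ r * ENNReal.ofReal (t ^ (δ * r)) := by
    intro r hr a t ht δ
    rw [ENNReal.mul_rpow_of_nonneg _ _ hr.le,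
      ENNReal.ofReal_rpow_of_nonneg (Real.rpow_nonneg ht.le δ) hr.le, ← Real.rpow_mul ht.le]
  calc ∫⁻ t in Ioc 0 x, ENNReal.ofReal |g t * f t| = ∫⁻ t in Ioc 0 x, (F * G) t := by
        refine setLIntegral_congr_fun measurableSet_Ioc fun t ht => ?_
        have : t ^ ε * t ^ (-ε) = 1 := by
          rw [← Real.rpow_add ht.1, add_neg_cancel, Real.rpow_zero]
        rw [Pi.mul_apply, mul_mul_mul_comm, ← ENNReal.ofReal_mul (Real.rpow_nonneg ht.1.le ε),
          this, ENNReal.ofReal_one, mul_one, ← ENNReal.ofReal_mul (abs_nonneg _), abs_mul,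
          mul_comm]
    _ ≤ (∫⁻ t in Ioc 0 x, F t ^ p) ^ (1 / p) * (∫⁻ t in Ioc 0 x, G t ^ q) ^ (1 / q) :=
        ENNReal.lintegral_mul_le_Lp_mul_Lq _ hpq (by fun_prop) (by fun_prop)
    _ = _ := by
        rw [setLIntegral_congr_fun measurableSet_Ioc fun t ht => hpow hpq.pos (f t) ht.1 ε,
          setLIntegral_congr_fun measurableSet_Ioc fun t ht => hpow hpq.symm.pos (g t) ht.1 (-ε)]

lemma lintegral_Ioi_rpow_mul_lintegral_Ioc {ψ : ℝ → ℝ≥0∞} (hψ : Measurable ψ) {β : ℝ}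
    (hβ : β < -1) :
    ∫⁻ x in Ioi 0, ENNReal.ofReal (x ^ β) * ∫⁻ t in Ioc 0 x, ψ t =
      ∫⁻ t in Ioi 0, ψ t * ENNReal.ofReal (-t ^ (β + 1) / (β + 1)) := by
  rw [← lintegral_mul_lintegral_Ioi_comm hψ (by fun_prop)]
  exact setLIntegral_congr_fun measurableSet_Ioi fun t ht => by
    rw [lintegral_Ioi_ofReal_rpow hβ ht]

lemma avg_abs_mul_rpow_le {p q : ℝ} (hpq : p.HolderConjugate q) {f g : ℝ → ℝ}
    (hf : Measurable f) (hg : Measurable g) {x : ℝ} (hx : 0 < x) :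
    ((ENNReal.ofReal x)⁻¹ * ∫⁻ t in Ioc 0 x, ENNReal.ofReal |g t * f t|) ^ p ≤
      ENNReal.ofReal (2 ^ (p - 1)) * GNorm q g ^ p * (ENNReal.ofReal (x ^ (-(p + 1) / 2)) *
        ∫⁻ t in Ioc 0 x, ENNReal.ofReal |f t| ^ p * ENNReal.ofReal (t ^ ((p - 1) / 2))) := by
  have hp := hpq.pos
  have hq := hpq.symm.pos
  set Φ := ∫⁻ t in Ioc 0 x, ENNReal.ofReal |f t| ^ p * ENNReal.ofReal (t ^ ((p - 1) / 2))
  have weighted :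
      ∫⁻ t in Ioc 0 x, ENNReal.ofReal |g t| ^ q * ENNReal.ofReal (t ^ (-(1 / 2) : ℝ)) ≤
        ENNReal.ofReal (2 * x ^ (1 / 2 : ℝ)) * GNorm q g ^ q := by
    convert lintegral_Ioc_mul_rpow_neg_le (by fun_prop)
      (fun y hy => lintegral_Ioc_rpow_le_GNorm g hq hy) (by norm_num : (0 : ℝ) < 1 / 2)
      (by norm_num) hx using 3
    norm_num; ring
  have holder := lintegral_Ioc_weighted_holder hpq hf hg (1 / (2 * q)) x
  rw [show 1 / (2 * q) * p = (p - 1) / 2 by rw [← hpq.div_conj_eq_sub_one]; ring,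
    show -(1 / (2 * q)) * q = -(1 / 2) by field_simp] at holder
  have scaling : (ENNReal.ofReal x)⁻¹ ^ p * ENNReal.ofReal (2 * x ^ (1 / 2 : ℝ)) ^ (p - 1) =
      ENNReal.ofReal (2 ^ (p - 1)) * ENNReal.ofReal (x ^ (-(p + 1) / 2)) := by
    rw [ENNReal.inv_rpow, ← ENNReal.rpow_neg, ENNReal.ofReal_rpow_of_pos hx,
      ENNReal.ofReal_rpow_of_pos (by positivity), ← ENNReal.ofReal_mul (by positivity),
      ← ENNReal.ofReal_mul (by positivity), Real.mul_rpow zero_le_two (by positivity),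
      ← Real.rpow_mul hx.le, mul_left_comm, ← Real.rpow_add hx]
    congr 3
    ring
  calc ((ENNReal.ofReal x)⁻¹ * ∫⁻ t in Ioc 0 x, ENNReal.ofReal |g t * f t|) ^ p
      ≤ ((ENNReal.ofReal x)⁻¹ * (Φ ^ (1 / p) *
          (ENNReal.ofReal (2 * x ^ (1 / 2 : ℝ)) * GNorm q g ^ q) ^ (1 / q))) ^ p := by
        gcongr
        exact holder.trans (by gcongr)
    _ = (ENNReal.ofReal x)⁻¹ ^ p * ENNReal.ofReal (2 * x ^ (1 / 2 : ℝ)) ^ (p - 1) *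
          GNorm q g ^ p * Φ := by
        rw [ENNReal.mul_rpow_of_nonneg _ _ hp.le, ENNReal.mul_rpow_of_nonneg _ _ hp.le,
          ← ENNReal.rpow_mul, ← ENNReal.rpow_mul, one_div_mul_cancel hp.ne', ENNReal.rpow_one,
          one_div_mul_eq_div, hpq.div_conj_eq_sub_one,
          ENNReal.mul_rpow_of_nonneg _ _ hpq.sub_one_pos.le, ← ENNReal.rpow_mul, mul_comm q,
          hpq.sub_one_mul_conj]
        ring
    _ = _ := by rw [scaling]; ring

lemma cesNorm_mul_le {p q : ℝ} (hpq : p.HolderConjugate q) {f g : ℝ → ℝ}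
    (hf : Measurable f) (hg : Measurable g) :
    CesNorm p (fun t => g t * f t) ≤
      ENNReal.ofReal (2 / (p - 1) ^ (1 / p)) * GNorm q g * LpNorm p f := by
  have hp := hpq.pos
  have hp1 := hpq.sub_one_pos
  set ψ : ℝ → ℝ≥0∞ := fun t => ENNReal.ofReal |f t| ^ p * ENNReal.ofReal (t ^ ((p - 1) / 2))
  have hψ : Measurable ψ := by fun_prop
  have hΦ : Measurable fun x => ∫⁻ t in Ioc 0 x, ψ t :=
    Monotone.measurable fun x y hxy => lintegral_mono_set (Ioc_subset_Ioc_right hxy)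
  have tail : ∀ t ∈ Ioi (0 : ℝ),
      ψ t * ENNReal.ofReal (-t ^ (-(p + 1) / 2 + 1) / (-(p + 1) / 2 + 1)) =
        ENNReal.ofReal |f t| ^ p * ENNReal.ofReal (2 / (p - 1)) := by
    intro t ht
    rw [mul_assoc, ← ENNReal.ofReal_mul (Real.rpow_nonneg (le_of_lt ht) _),
      show -(p + 1) / 2 + 1 = -((p - 1) / 2) by ring, Real.rpow_neg (le_of_lt ht), neg_div_neg_eq,
      mul_div_assoc', mul_inv_cancel₀ (Real.rpow_pos_of_pos ht _).ne', one_div_div]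
  have constant : ENNReal.ofReal (2 / (p - 1) ^ (1 / p)) ^ p =
      ENNReal.ofReal (2 ^ (p - 1)) * ENNReal.ofReal (2 / (p - 1)) := by
    rw [ENNReal.ofReal_rpow_of_nonneg (by positivity) hp.le,
      ← ENNReal.ofReal_mul (by positivity), Real.div_rpow zero_le_two (by positivity),
      ← Real.rpow_mul hp1.le, one_div_mul_cancel hp.ne', Real.rpow_one,
      Real.rpow_sub_one two_ne_zero]
    ring_nf
  rw [CesNorm, ← ENNReal.rpow_le_rpow_iff hp, ← ENNReal.rpow_mul, one_div_mul_cancel hp.ne',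
    ENNReal.rpow_one]
  calc ∫⁻ x in Ioi 0, ((ENNReal.ofReal x)⁻¹ * ∫⁻ t in Ioc 0 x, ENNReal.ofReal |g t * f t|) ^ p
      ≤ ∫⁻ x in Ioi 0, ENNReal.ofReal (2 ^ (p - 1)) * GNorm q g ^ p *
          (ENNReal.ofReal (x ^ (-(p + 1) / 2)) * ∫⁻ t in Ioc 0 x, ψ t) :=
        setLIntegral_mono' measurableSet_Ioi fun x hx => avg_abs_mul_rpow_le hpq hf hg hx
    _ = ENNReal.ofReal (2 ^ (p - 1)) * GNorm q g ^ p *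
          (ENNReal.ofReal (2 / (p - 1)) * ∫⁻ t in Ioi 0, ENNReal.ofReal |f t| ^ p) := by
        rw [lintegral_const_mul _ (by fun_prop),
          lintegral_Ioi_rpow_mul_lintegral_Ioc hψ (by linarith),
          setLIntegral_congr_fun measurableSet_Ioi tail,
          lintegral_mul_const' _ _ ENNReal.ofReal_ne_top]
        ring
    _ = (ENNReal.ofReal (2 / (p - 1) ^ (1 / p)) * GNorm q g * LpNorm p f) ^ p := by
        rw [ENNReal.mul_rpow_of_nonneg _ _ hp.le, ENNReal.mul_rpow_of_nonneg _ _ hp.le, constant,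
          LpNorm, ← ENNReal.rpow_mul, one_div_mul_cancel hp.ne', ENNReal.rpow_one]
        ring

lemma lintegral_Ioc_le_cesNorm (h : ℝ → ℝ) {p : ℝ} (hp : 0 < p) {x : ℝ} (hx : 0 < x) :
    ENNReal.ofReal x ^ (1 / p) *
        ((ENNReal.ofReal (2 * x))⁻¹ * ∫⁻ t in Ioc 0 x, ENNReal.ofReal |h t|) ≤
      CesNorm p h := by
  rw [CesNorm, ← ENNReal.rpow_le_rpow_iff hp, ← ENNReal.rpow_mul, one_div_mul_cancel hp.ne',
    ENNReal.rpow_one, ENNReal.mul_rpow_of_nonneg _ _ hp.le, ← ENNReal.rpow_mul,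
    one_div_mul_cancel hp.ne', ENNReal.rpow_one]
  calc ENNReal.ofReal x *
        ((ENNReal.ofReal (2 * x))⁻¹ * ∫⁻ t in Ioc 0 x, ENNReal.ofReal |h t|) ^ p
      = ∫⁻ _ in Ioc x (2 * x),
          ((ENNReal.ofReal (2 * x))⁻¹ * ∫⁻ t in Ioc 0 x, ENNReal.ofReal |h t|) ^ p := by
        rw [setLIntegral_const, Real.volume_Ioc, mul_comm, two_mul, add_sub_cancel_right]
    _ ≤ ∫⁻ y in Ioc x (2 * x),
          ((ENNReal.ofReal y)⁻¹ * ∫⁻ t in Ioc 0 y, ENNReal.ofReal |h t|) ^ p := by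
        refine setLIntegral_mono' measurableSet_Ioc fun y hy => ?_
        gcongr
        · exact hy.2
        · exact hy.1.le
    _ ≤ _ := lintegral_mono_set fun y hy => hx.trans hy.1

lemma exists_lpNorm_le_one_rpow_le_lintegral {p q : ℝ} (hpq : p.HolderConjugate q) {u : ℝ → ℝ}
    (hu : Measurable u) (hu0 : ∀ t, 0 ≤ u t) {x : ℝ}
    (hA : ∫⁻ t in Ioc 0 x, ENNReal.ofReal (u t) ^ q ≠ ⊤) :
    ∃ f : ℝ → ℝ, Measurable f ∧ LpNorm p f ≤ 1 ∧
      (∫⁻ t in Ioc 0 x, ENNReal.ofReal (u t) ^ q) ^ (1 / q) ≤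
        ∫⁻ t in Ioc 0 x, ENNReal.ofReal (u t * |f t|) := by
  have hp := hpq.pos
  have hq := hpq.symm.pos
  set A := ∫⁻ t in Ioc 0 x, ENNReal.ofReal (u t) ^ q
  by_cases hA0 : A = 0
  · refine ⟨0, measurable_const, ?_, ?_⟩
    · simp [LpNorm, hp]
    · simp [hA0, hq]
  set r : ℝ := A.toReal ^ (-(1 / p))
  have hr : ENNReal.ofReal r = A ^ (-(1 / p)) := by
    rw [← ENNReal.ofReal_rpow_of_pos (ENNReal.toReal_pos hA0 hA), ENNReal.ofReal_toReal hA]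
  set f := (Ioc 0 x).indicator fun t => u t ^ (q - 1) * r with hf
  have hfm : Measurable f := (by fun_prop : Measurable fun t => u t ^ (q - 1) * r).indicator
    measurableSet_Ioc
  have hf_pow : ∀ t, ENNReal.ofReal |f t| ^ p =
      (Ioc 0 x).indicator (fun t => ENNReal.ofReal (u t) ^ q * ENNReal.ofReal r ^ p) t := by
    intro t
    by_cases ht : t ∈ Ioc 0 x
    · rw [hf, indicator_of_mem ht, indicator_of_mem ht, abs_of_nonneg (by positivity [hu0 t]),
        ENNReal.ofReal_mul (by positivity [hu0 t]), ENNReal.mul_rpow_of_nonneg _ _ hp.le,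
        ← ENNReal.ofReal_rpow_of_nonneg (hu0 t) hpq.symm.sub_one_pos.le, ← ENNReal.rpow_mul,
        hpq.symm.sub_one_mul_conj]
    · simp [hf, ht, hp]
  have hr_pow : ENNReal.ofReal r ^ p = A⁻¹ := by
    rw [hr, ← ENNReal.rpow_mul, neg_mul, one_div_mul_cancel hp.ne', ENNReal.rpow_neg_one]
  have hf_mul : ∀ t ∈ Ioc 0 x,
      ENNReal.ofReal (u t * |f t|) = ENNReal.ofReal (u t) ^ q * ENNReal.ofReal r := by
    intro t ht
    rw [hf, indicator_of_mem ht, abs_of_nonneg (by positivity [hu0 t]), ← mul_assoc,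
      ← Real.rpow_one_add' (hu0 t) (by linarith [hpq.symm.pos]), add_sub_cancel,
      ENNReal.ofReal_mul (by positivity [hu0 t]), ENNReal.ofReal_rpow_of_nonneg (hu0 t) hq.le]
  refine ⟨f, hfm, ?_, le_of_eq ?_⟩
  · rw [LpNorm, lintegral_congr hf_pow, setLIntegral_indicator measurableSet_Ioc,
      inter_eq_left.mpr Ioc_subset_Ioi_self, lintegral_mul_const' _ _ (by simp [hr_pow, hA0]),
      hr_pow, ENNReal.mul_inv_cancel hA0 hA, ENNReal.one_rpow]
  · rw [setLIntegral_congr_fun measurableSet_Ioc hf_mul,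
      lintegral_mul_const' _ _ ENNReal.ofReal_ne_top, hr,
      show 1 / q = 1 + -(1 / p) by linarith [hpq.one_div_add_one_div],
      ENNReal.rpow_add _ _ hA0 hA, ENNReal.rpow_one]

/-- The norm of the multiplier space `M(L_p, Ces_p)`. -/
noncomputable def multiplierNorm (p : ℝ) (g : ℝ → ℝ) : ℝ≥0∞ :=
  ⨆ (f : ℝ → ℝ) (_ : Measurable f) (_ : LpNorm p f ≤ 1), CesNorm p (fun t => g t * f t)

lemma multiplierNorm_le {p q : ℝ} (hpq : p.HolderConjugate q) {g : ℝ → ℝ} (hg : Measurable g) :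
    multiplierNorm p g ≤ ENNReal.ofReal (2 / (p - 1) ^ (1 / p)) * GNorm q g :=
  iSup₂_le fun _ hf => iSup_le fun hf1 =>
    (cesNorm_mul_le hpq hf hg).trans (mul_le_of_le_one_right' hf1)

lemma avg_rpow_le_multiplierNorm {p q : ℝ} (hpq : p.HolderConjugate q) {g u : ℝ → ℝ}
    (hu : Measurable u) (hu0 : ∀ t, 0 ≤ u t) (hug : ∀ t, u t ≤ |g t|) {x : ℝ} (hx : 0 < x)
    (hA : ∫⁻ t in Ioc 0 x, ENNReal.ofReal (u t) ^ q ≠ ⊤) :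
    2⁻¹ * ((ENNReal.ofReal x)⁻¹ * ∫⁻ t in Ioc 0 x, ENNReal.ofReal (u t) ^ q) ^ (1 / q) ≤
      multiplierNorm p g := by
  obtain ⟨f, hf, hf1, hfA⟩ := exists_lpNorm_le_one_rpow_le_lintegral hpq hu hu0 hA
  have hx0 : ENNReal.ofReal x ≠ 0 := by simpa using hx
  have scaling : 2⁻¹ * (ENNReal.ofReal x)⁻¹ ^ (1 / q) =
      ENNReal.ofReal x ^ (1 / p) * (ENNReal.ofReal (2 * x))⁻¹ := by
    rw [ENNReal.ofReal_mul zero_le_two, ENNReal.ofReal_ofNat,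
      ENNReal.mul_inv (by simp) (by simp), ← ENNReal.rpow_neg_one (ENNReal.ofReal x),
      ← ENNReal.rpow_mul,
      show -1 * (1 / q) = 1 / p + -1 by linarith [hpq.one_div_add_one_div],
      ENNReal.rpow_add _ _ hx0 ENNReal.ofReal_ne_top]
    ring
  calc 2⁻¹ * ((ENNReal.ofReal x)⁻¹ * ∫⁻ t in Ioc 0 x, ENNReal.ofReal (u t) ^ q) ^ (1 / q)
      = ENNReal.ofReal x ^ (1 / p) * ((ENNReal.ofReal (2 * x))⁻¹ *
          (∫⁻ t in Ioc 0 x, ENNReal.ofReal (u t) ^ q) ^ (1 / q)) := by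
        rw [ENNReal.mul_rpow_of_nonneg _ _ hpq.symm.one_div_nonneg, ← mul_assoc, scaling,
          mul_assoc]
    _ ≤ ENNReal.ofReal x ^ (1 / p) * ((ENNReal.ofReal (2 * x))⁻¹ *
          ∫⁻ t in Ioc 0 x, ENNReal.ofReal |g t * f t|) := by
        gcongr
        refine hfA.trans (lintegral_mono fun t => ENNReal.ofReal_le_ofReal ?_)
        rw [abs_mul]
        exact mul_le_mul_of_nonneg_right (hug t) (abs_nonneg _)
    _ ≤ CesNorm p (fun t => g t * f t) := lintegral_Ioc_le_cesNorm _ hpq.pos hx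
    _ ≤ multiplierNorm p g := le_iSup₂_of_le f hf (le_iSup_of_le hf1 le_rfl)

lemma iSup_lintegral_ofReal_min_rpow {α : Type*} [MeasurableSpace α] (μ : Measure α)
    {g : α → ℝ} (hg : Measurable g) {q : ℝ} (hq : 0 ≤ q) :
    ⨆ n : ℕ, ∫⁻ t, ENNReal.ofReal (min |g t| n) ^ q ∂μ = ∫⁻ t, ENNReal.ofReal |g t| ^ q ∂μ := by
  rw [← lintegral_iSup (fun n => by fun_prop) fun m n hmn t => by gcongr]
  refine lintegral_congr fun t =>
    le_antisymm (iSup_le fun n => by gcongr; exact min_le_left _ _) ?_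
  exact le_iSup_of_le ⌈|g t|⌉₊ (by rw [min_eq_left (Nat.le_ceil _)])

lemma GNorm_le_multiplierNorm {p q : ℝ} (hpq : p.HolderConjugate q) {g : ℝ → ℝ}
    (hg : Measurable g) : 2⁻¹ * GNorm q g ≤ multiplierNorm p g := by
  have hq := hpq.symm.pos
  simp_rw [GNorm, ENNReal.mul_iSup]
  refine iSup₂_le fun x hx => ?_
  have finite : ∀ n : ℕ, ∫⁻ t in Ioc 0 x, ENNReal.ofReal (min |g t| n) ^ q ≠ ⊤ := by
    intro n
    refine ne_top_of_le_ne_top (b := ∫⁻ _ in Ioc 0 x, ENNReal.ofReal n ^ q) ?_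
      (lintegral_mono fun t => by gcongr; exact min_le_right _ _)
    simp [ENNReal.rpow_ne_top_of_nonneg hq.le, ENNReal.mul_ne_top]
  have rpow_iSup : ∀ s : ℕ → ℝ≥0∞, (⨆ n, s n) ^ (1 / q) = ⨆ n, s n ^ (1 / q) :=
    (ENNReal.orderIsoRpow (1 / q) (one_div_pos.2 hq)).map_iSup
  rw [← iSup_lintegral_ofReal_min_rpow _ hg hq.le, ENNReal.mul_iSup, rpow_iSup,
    ENNReal.mul_iSup]
  exact iSup_le fun n => avg_rpow_le_multiplierNorm hpq (by fun_prop)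
    (fun t => le_min (abs_nonneg _) n.cast_nonneg) (fun t => min_le_left _ _) hx (finite n)

/-- Identification of the multiplier space `M(L_p, Ces_p)` with the space
`G_q = (Ces_∞)^{(q)}`. -/
theorem stmt_9 (p q : ℝ) (hp : 1 < p) (hpq : 1 / p + 1 / q = 1) :
    ∃ c C : ℝ, 0 < c ∧ 0 < C ∧ ∀ g : ℝ → ℝ, Measurable g →
      ENNReal.ofReal c * GNorm q g ≤
          (⨆ (f : ℝ → ℝ) (_ : Measurable f) (_ : LpNorm p f ≤ 1),
            CesNorm p (fun t => g t * f t)) ∧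
        (⨆ (f : ℝ → ℝ) (_ : Measurable f) (_ : LpNorm p f ≤ 1),
            CesNorm p (fun t => g t * f t)) ≤
          ENNReal.ofReal C * GNorm q g := by
  have hpq' : p.HolderConjugate q :=
    Real.holderConjugate_iff.mpr ⟨hp, by simpa only [one_div] using hpq⟩
  refine ⟨1 / 2, 2 / (p - 1) ^ (1 / p), by norm_num, by have := hpq'.sub_one_pos; positivity,
    fun g hg => ⟨?_, multiplierNorm_le hpq' hg⟩⟩
  rw [one_div, ENNReal.ofReal_inv_of_pos two_pos, ENNReal.ofReal_ofNat]
  exact GNorm_le_multiplierNorm hpq' hg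
end

section
/- Let 1 ≤ p < ∞. There exists a constant C ≥ 1, depending only on p, such that: (a) for all real sequences y, z one has ‖y·z‖_{ℓ_p} ≤ C · ‖y‖_{τℓ_p} · ‖z‖_{g_p}; and (b) every real sequence x with ‖x‖_{ℓ_p} < ∞ can be written as a coordinatewise product x = y·z of two sequences with ‖y‖_{τℓ_p} · ‖z‖_{g_p} ≤ C · ‖x‖_{ℓ_p}. -/
/-!
Part (a) is Abel summation: the weights `c n = (sup_{k>n} |y k|)^p` are nonincreasing and the
partial sums of `|z k|^p` grow at most like `n ‖z‖_{g_p}^p`, so `∑ c n |z (n+1)|^p ≤ ‖z‖_{g_p}^p ∑ c n`.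

For (b), put `a k = |x k|^p` and let `w` be constant on each dyadic block `[2^m, 2^(m+1))`, equal to
`sup_{l ≥ m} 2^(-l) ∑_{block l} a`. Then `w` is nonincreasing, `∑ w ≤ 2 ∑ a` (block `l` is counted
in fewer than `2^(l+1)` terms, each time with weight `2^(-l)`), and `∑_{k ≤ n} a k / w k ≤ 2n` since
the `m`-th block contributes at most `2^m`. Hence `y = w^(1/p)` and `z = x / y` satisfy
`‖y‖_{τℓ_p}^p = ‖y‖_{ℓ_p}^p ≤ 2 ‖x‖_{ℓ_p}^p` and `‖z‖_{g_p}^p ≤ 2`.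
-/

open ENNReal

/-- The `ℓ_p` norm `‖x‖_{ℓ_p} = (∑_{n=1}^∞ |x_n|^p)^{1/p}` of a real sequence
(indexed so that the entries of the sequence are `x 1, x 2, …`). -/
noncomputable def lpSeqNorm (p : ℝ) (x : ℕ → ℝ) : ℝ≥0∞ :=
  (∑' n : ℕ, ENNReal.ofReal |x (n + 1)| ^ p) ^ (1 / p)

/-- The Tandori norm `‖x‖_{τℓ_p} = (∑_{n=1}^∞ (sup_{k≥n} |x_k|)^p)^{1/p}`. -/
noncomputable def tlNorm (p : ℝ) (x : ℕ → ℝ) : ℝ≥0∞ :=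
  (∑' n : ℕ, (⨆ (k : ℕ) (_ : n + 1 ≤ k), ENNReal.ofReal |x k|) ^ p) ^ (1 / p)

/-- Bennett's norm `‖x‖_{g_q} = sup_{n≥1} ((1/n)∑_{k=1}^n |x_k|^q)^{1/q}`. -/
noncomputable def gNorm (q : ℝ) (x : ℕ → ℝ) : ℝ≥0∞ :=
  ⨆ n : ℕ, (((n : ℝ≥0∞) + 1)⁻¹ * ∑ k ∈ Finset.Icc 1 (n + 1), ENNReal.ofReal |x k| ^ q) ^ (1 / q)

open Finset

theorem sum_range_mul_le_of_antitone {b : ℕ → ℝ≥0∞} {M : ℝ≥0∞}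
    (hb : ∀ n, ∑ k ∈ range n, b k ≤ n * M) (N : ℕ) {c : ℕ → ℝ≥0∞} (hc : Antitone c) :
    ∑ n ∈ range N, c n * b n ≤ M * ∑ n ∈ range N, c n := by
  induction N generalizing c with
  | zero => simp
  | succ N ih =>
    -- peel off the constant `c N` and apply the induction hypothesis to `c - c N`
    set c' : ℕ → ℝ≥0∞ := fun n => c n - c N
    have hc' : Antitone c' := fun m n h => tsub_le_tsub_right (hc h) _
    have hsplit (f : ℕ → ℝ≥0∞) : ∑ n ∈ range (N + 1), c n * f n =
        ∑ n ∈ range N, c' n * f n + c N * ∑ n ∈ range (N + 1), f n := by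
      have hc_eq : ∀ n ∈ range (N + 1), c n * f n = c' n * f n + c N * f n := fun n hn => by
        rw [← add_mul, tsub_add_cancel_of_le (hc (mem_range_succ_iff.mp hn))]
      rw [sum_congr rfl hc_eq, sum_add_distrib, ← mul_sum, sum_range_succ (fun n => c' n * f n)]
      simp [c']
    have hsum_c := hsplit 1
    simp only [Pi.one_apply, mul_one, sum_const, card_range, nsmul_eq_mul] at hsum_c
    calc ∑ n ∈ range (N + 1), c n * b n
        = ∑ n ∈ range N, c' n * b n + c N * ∑ n ∈ range (N + 1), b n := hsplit b
      _ ≤ M * ∑ n ∈ range N, c' n + c N * ((N + 1 : ℕ) * M) := by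
          gcongr
          exacts [ih hc', hb _]
      _ = M * ∑ n ∈ range (N + 1), c n := by rw [hsum_c]; push_cast; ring

theorem tsum_mul_le_of_antitone {b c : ℕ → ℝ≥0∞} {M : ℝ≥0∞} (hc : Antitone c)
    (hb : ∀ n, ∑ k ∈ range n, b k ≤ n * M) : ∑' n, c n * b n ≤ M * ∑' n, c n := by
  rw [ENNReal.tsum_eq_iSup_nat]
  exact iSup_le fun N => (sum_range_mul_le_of_antitone hb N hc).trans
    (mul_le_mul_right (ENNReal.sum_le_tsum _) M)

theorem sum_Icc_one_eq_sum_range {M : Type*} [AddCommMonoid M] (f : ℕ → M) (n : ℕ) :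
    ∑ k ∈ Icc 1 n, f k = ∑ k ∈ range n, f (k + 1) := by
  rw [← Ico_add_one_right_eq_Icc, sum_Ico_eq_sum_range]
  simp [add_comm]

theorem gNorm_le_iff {p : ℝ} (hp : 0 < p) {z : ℕ → ℝ} {M : ℝ≥0∞} :
    gNorm p z ≤ M ↔ ∀ n : ℕ, ∑ k ∈ Icc 1 n, ENNReal.ofReal |z k| ^ p ≤ n * M ^ p := by
  have hterm (n : ℕ) :
      (((n : ℝ≥0∞) + 1)⁻¹ * ∑ k ∈ Icc 1 (n + 1), ENNReal.ofReal |z k| ^ p) ^ (1 / p) ≤ M ↔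
        ∑ k ∈ Icc 1 (n + 1), ENNReal.ofReal |z k| ^ p ≤ ((n + 1 : ℕ) : ℝ≥0∞) * M ^ p := by
    rw [one_div, ENNReal.rpow_inv_le_iff hp, ENNReal.inv_mul_le_iff (by simp) (by simp)]
    push_cast; rfl
  simp only [gNorm, iSup_le_iff, hterm]
  exact ⟨fun h n => n.casesOn (by simp) h, fun h n => h (n + 1)⟩

theorem lpSeqNorm_mul_le_tlNorm_mul_gNorm {p : ℝ} (hp : 0 < p) (y z : ℕ → ℝ) :
    lpSeqNorm p (fun n => y n * z n) ≤ tlNorm p y * gNorm p z := by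
  set c : ℕ → ℝ≥0∞ := fun n => (⨆ (k : ℕ) (_ : n + 1 ≤ k), ENNReal.ofReal |y k|) ^ p
  have hc : Antitone c := fun m n h =>
    ENNReal.rpow_le_rpow (biSup_mono fun k hk => by omega) hp.le
  have hb (n : ℕ) : ∑ k ∈ range n, ENNReal.ofReal |z (k + 1)| ^ p ≤ n * gNorm p z ^ p := by
    rw [← sum_Icc_one_eq_sum_range (fun k => ENNReal.ofReal |z k| ^ p)]
    exact (gNorm_le_iff hp).1 le_rfl n
  have hterm (n : ℕ) : ENNReal.ofReal |y (n + 1) * z (n + 1)| ^ p ≤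
      c n * ENNReal.ofReal |z (n + 1)| ^ p := by
    rw [abs_mul, ENNReal.ofReal_mul (abs_nonneg _), ← ENNReal.mul_rpow_of_nonneg _ _ hp.le]
    gcongr
    exact le_iSup₂ (f := fun k (_ : n + 1 ≤ k) => ENNReal.ofReal |y k|) (n + 1) le_rfl
  calc lpSeqNorm p (fun n => y n * z n) ≤ (gNorm p z ^ p * ∑' n, c n) ^ (1 / p) := by
        unfold lpSeqNorm
        gcongr
        exact (ENNReal.tsum_le_tsum hterm).trans (tsum_mul_le_of_antitone hc hb)
    _ = tlNorm p y * gNorm p z := by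
        rw [ENNReal.mul_rpow_of_nonneg _ _ (by positivity), ← ENNReal.rpow_mul,
          mul_one_div_cancel hp.ne', ENNReal.rpow_one, mul_comm]
        rfl

section Dyadic

variable (a : ℕ → ℝ≥0∞)

noncomputable def dyadicBlockSum (m : ℕ) : ℝ≥0∞ :=
  ∑ k ∈ Ico (2 ^ m) (2 ^ (m + 1)), a k

noncomputable def dyadicMajorant (k : ℕ) : ℝ≥0∞ :=
  ⨆ (l : ℕ) (_ : Nat.log 2 k ≤ l), dyadicBlockSum a l / 2 ^ l

theorem sum_range_dyadicBlockSum (L : ℕ) :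
    ∑ l ∈ range L, dyadicBlockSum a l = ∑ k ∈ Ico 1 (2 ^ L), a k := by
  induction L with
  | zero => simp
  | succ L ih =>
    rw [sum_range_succ, ih, dyadicBlockSum,
      sum_Ico_consecutive _ Nat.one_le_two_pow (Nat.pow_le_pow_right two_pos L.le_succ)]

theorem tsum_dyadicBlockSum_le : ∑' l, dyadicBlockSum a l ≤ ∑' n, a (n + 1) := by
  rw [ENNReal.tsum_eq_iSup_nat]
  refine iSup_le fun L => ?_
  rw [sum_range_dyadicBlockSum, sum_Ico_eq_sum_range]
  simpa only [add_comm 1] using ENNReal.sum_le_tsum (f := fun n => a (n + 1)) _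

theorem dyadicMajorant_le_tsum (k : ℕ) : dyadicMajorant a k ≤ ∑' n, a (n + 1) :=
  iSup₂_le fun l _ =>
    (ENNReal.div_le_of_le_mul (le_mul_of_one_le_right' (one_le_pow₀ one_le_two))).trans
      ((ENNReal.le_tsum l).trans (tsum_dyadicBlockSum_le a))

theorem antitone_dyadicMajorant : Antitone (dyadicMajorant a) := fun _ _ h =>
  biSup_mono fun _ hl => (Nat.log_mono_right h).trans hl

theorem dyadicBlockSum_log_div_le_dyadicMajorant (k : ℕ) :
    dyadicBlockSum a (Nat.log 2 k) / 2 ^ Nat.log 2 k ≤ dyadicMajorant a k :=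
  le_iSup₂ (f := fun l (_ : Nat.log 2 k ≤ l) => dyadicBlockSum a l / 2 ^ l) _ le_rfl

theorem mem_Ico_pow_log {k : ℕ} (hk : k ≠ 0) : k ∈ Ico (2 ^ Nat.log 2 k) (2 ^ (Nat.log 2 k + 1)) :=
  mem_Ico.2 ⟨Nat.pow_log_le_self 2 hk, Nat.lt_pow_succ_log_self one_lt_two k⟩

theorem eq_zero_of_dyadicMajorant_eq_zero {k : ℕ} (hk : k ≠ 0) (h : dyadicMajorant a k = 0) :
    a k = 0 := by
  have hB := dyadicBlockSum_log_div_le_dyadicMajorant a k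
  simp only [h, nonpos_iff_eq_zero, ENNReal.div_eq_zero_iff, ENNReal.pow_eq_top_iff,
    ENNReal.ofNat_ne_top, false_and, or_false, dyadicBlockSum, sum_eq_zero_iff] at hB
  exact hB k (mem_Ico_pow_log hk)

theorem tsum_dyadicMajorant_le : ∑' n, dyadicMajorant a (n + 1) ≤ 2 * ∑' n, a (n + 1) := by
  set F : ℕ → ℕ → ℝ≥0∞ := fun n l => if n < 2 ^ (l + 1) then dyadicBlockSum a l / 2 ^ l else 0
  have hmajorant (n : ℕ) : dyadicMajorant a (n + 1) ≤ ∑' l, F n l := iSup₂_le fun l hl => by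
    have hn : n < 2 ^ (l + 1) :=
      Nat.lt_of_succ_lt ((Nat.log_lt_iff_lt_pow one_lt_two (by omega : n + 1 ≠ 0)).1 (by omega))
    simpa [F, hn] using ENNReal.le_tsum (f := F n) l
  have hcount (l : ℕ) : ∑' n, F n l = 2 * dyadicBlockSum a l := by
    rw [tsum_eq_sum (s := range (2 ^ (l + 1))) fun n hn => if_neg (by simpa using hn),
      sum_congr rfl fun n hn => if_pos (mem_range.1 hn), sum_const, card_range, nsmul_eq_mul]
    push_cast
    rw [pow_succ, mul_comm _ 2, mul_assoc, ENNReal.mul_div_cancel (by simp) (by simp)]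
  calc ∑' n, dyadicMajorant a (n + 1) ≤ ∑' n, ∑' l, F n l := ENNReal.tsum_le_tsum hmajorant
    _ = ∑' l, 2 * dyadicBlockSum a l := by rw [ENNReal.tsum_comm]; simp only [hcount]
    _ ≤ 2 * ∑' n, a (n + 1) := by
        rw [ENNReal.tsum_mul_left]
        gcongr 2 * ?_
        exact tsum_dyadicBlockSum_le a

theorem sum_Ico_div_dyadicMajorant_le (m : ℕ) :
    ∑ k ∈ Ico (2 ^ m) (2 ^ (m + 1)), a k / dyadicMajorant a k ≤ 2 ^ m := by
  calc ∑ k ∈ Ico (2 ^ m) (2 ^ (m + 1)), a k / dyadicMajorant a k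
      ≤ ∑ k ∈ Ico (2 ^ m) (2 ^ (m + 1)), a k / (dyadicBlockSum a m / 2 ^ m) := by
        gcongr with k hk
        rw [mem_Ico] at hk
        simpa [Nat.log_eq_of_pow_le_of_lt_pow hk.1 hk.2] using
          dyadicBlockSum_log_div_le_dyadicMajorant a k
    _ = dyadicBlockSum a m / (dyadicBlockSum a m / 2 ^ m) := by
        simp only [dyadicBlockSum, div_eq_mul_inv _ (_ / _), sum_mul]
    _ ≤ 2 ^ m := by
        rw [ENNReal.div_le_iff_le_mul (Or.inr (by simp)) (Or.inr (by simp)),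
          ENNReal.mul_div_cancel (by simp) (by simp)]

theorem sum_Icc_div_dyadicMajorant_le {n : ℕ} (hn : n ≠ 0) :
    ∑ k ∈ Icc 1 n, a k / dyadicMajorant a k ≤ 2 * n := by
  set L := Nat.log 2 n + 1
  have hsub : Icc 1 n ⊆ Ico 1 (2 ^ L) := fun k hk => by
    rw [mem_Icc] at hk
    exact mem_Ico.2 ⟨hk.1, hk.2.trans_lt (Nat.lt_pow_succ_log_self one_lt_two n)⟩
  calc ∑ k ∈ Icc 1 n, a k / dyadicMajorant a k
      ≤ ∑ k ∈ Ico 1 (2 ^ L), a k / dyadicMajorant a k := sum_le_sum_of_subset hsub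
    _ = ∑ m ∈ range L, ∑ k ∈ Ico (2 ^ m) (2 ^ (m + 1)), a k / dyadicMajorant a k :=
        (sum_range_dyadicBlockSum _ L).symm
    _ ≤ ∑ m ∈ range L, (2 : ℝ≥0∞) ^ m := sum_le_sum fun m _ => sum_Ico_div_dyadicMajorant_le a m
    _ ≤ 2 ^ L := by exact_mod_cast (Nat.geomSum_lt le_rfl fun k hk => mem_range.1 hk).le
    _ ≤ 2 * n := by
        rw [pow_succ, mul_comm]
        gcongr
        exact_mod_cast Nat.pow_log_le_self 2 hn

end Dyadic

theorem tlNorm_eq_lpSeqNorm_of_antitone {p : ℝ} {y : ℕ → ℝ}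
    (hy : Antitone fun n => |y (n + 1)|) : tlNorm p y = lpSeqNorm p y := by
  unfold tlNorm lpSeqNorm
  congr 2
  ext n
  congr 1
  refine le_antisymm (iSup₂_le fun k hk => ?_)
    (le_iSup₂ (f := fun k (_ : n + 1 ≤ k) => ENNReal.ofReal |y k|) (n + 1) le_rfl)
  obtain ⟨j, rfl⟩ := Nat.exists_eq_add_of_le hk
  rw [Nat.add_right_comm]
  exact ENNReal.ofReal_le_ofReal (hy (n.le_add_right j))

theorem exists_mul_eq_tlNorm_mul_gNorm_le {p : ℝ} (hp : 0 < p) {x : ℕ → ℝ}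
    (hx : lpSeqNorm p x ≠ ⊤) :
    ∃ y z : ℕ → ℝ, (∀ n, x n = y n * z n) ∧
      tlNorm p y * gNorm p z ≤ 4 ^ (1 / p) * lpSeqNorm p x := by
  set a : ℕ → ℝ≥0∞ := fun k => ENNReal.ofReal |x k| ^ p
  set w := dyadicMajorant a
  have hlp : lpSeqNorm p x = (∑' n, a (n + 1)) ^ (1 / p) := rfl
  have hT : ∑' n, a (n + 1) ≠ ⊤ := fun h => hx <| by
    rw [hlp, h, ENNReal.top_rpow_of_pos (by positivity)]
  have hw_ne_top (k : ℕ) : w k ≠ ⊤ := ne_top_of_le_ne_top hT (dyadicMajorant_le_tsum a k)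
  -- none of the norms sees index `0`, and `x k = 0` wherever `y k = 0`, so `z = x / y` works
  set y : ℕ → ℝ := fun k => if k = 0 then 1 else (w k ^ (1 / p)).toReal
  have hy (k : ℕ) (hk : k ≠ 0) : ENNReal.ofReal |y k| = w k ^ (1 / p) := by
    simp only [y, if_neg hk, abs_of_nonneg ENNReal.toReal_nonneg]
    exact ENNReal.ofReal_toReal (ENNReal.rpow_ne_top_of_nonneg (by positivity) (hw_ne_top k))
  have hy_rpow (k : ℕ) (hk : k ≠ 0) : ENNReal.ofReal |y k| ^ p = w k := by
    rw [hy k hk, ← ENNReal.rpow_mul, one_div_mul_cancel hp.ne', ENNReal.rpow_one]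
  refine ⟨y, fun k => x k / y k, fun k => ?_, ?_⟩
  · rcases eq_or_ne (y k) 0 with h | h
    · have hk : k ≠ 0 := by rintro rfl; simp [y] at h
      have hw : w k = 0 := by rw [← hy_rpow k hk, h]; simp [hp]
      have hak : a k = 0 := eq_zero_of_dyadicMajorant_eq_zero a hk hw
      simp only [a, rpow_eq_zero_iff, ofReal_eq_zero, abs_nonpos_iff, hp, and_true, ofReal_ne_top,
        false_and, or_false] at hak
      simp [hak]
    · rw [mul_div_cancel₀ _ h]
  have hy_anti : Antitone fun n => |y (n + 1)| := fun m n h => by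
    rw [← ENNReal.ofReal_le_ofReal_iff (abs_nonneg _), hy _ n.succ_ne_zero, hy _ m.succ_ne_zero]
    exact ENNReal.rpow_le_rpow (antitone_dyadicMajorant a (by omega)) (by positivity)
  have htl : tlNorm p y ≤ (2 * ∑' n, a (n + 1)) ^ (1 / p) := by
    rw [tlNorm_eq_lpSeqNorm_of_antitone hy_anti, lpSeqNorm]
    gcongr
    simpa only [fun n => hy_rpow (n + 1) n.succ_ne_zero] using tsum_dyadicMajorant_le a
  have hg : gNorm p (fun k => x k / y k) ≤ 2 ^ (1 / p) := by
    rw [gNorm_le_iff hp]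
    rintro (_ | n)
    · simp
    rw [← ENNReal.rpow_mul, one_div_mul_cancel hp.ne', ENNReal.rpow_one, mul_comm]
    refine le_trans (sum_le_sum fun k hk => ?_) (sum_Icc_div_dyadicMajorant_le a n.succ_ne_zero)
    have hk : k ≠ 0 := by rw [mem_Icc] at hk; omega
    rcases eq_or_ne (y k) 0 with h | h
    · simp [h, hp]
    · rw [abs_div, ENNReal.ofReal_div_of_pos (abs_pos.2 h), ENNReal.div_rpow_of_nonneg _ _ hp.le,
        hy_rpow k hk]
  calc tlNorm p y * gNorm p (fun k => x k / y k)
      ≤ (2 * ∑' n, a (n + 1)) ^ (1 / p) * 2 ^ (1 / p) := by gcongr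
    _ = 4 ^ (1 / p) * lpSeqNorm p x := by
        rw [hlp, show (4 : ℝ≥0∞) = 2 * 2 by norm_num,
          ENNReal.mul_rpow_of_nonneg _ _ (by positivity),
          ENNReal.mul_rpow_of_nonneg _ _ (by positivity)]
        ring

/-- The factorization `ℓ_p = τℓ_p ⊙ g_p` (Bennett; Astashkin–Maligranda). -/
theorem stmt_12 (p : ℝ) (hp : 1 ≤ p) :
    ∃ C : ℝ, 1 ≤ C ∧
      (∀ y z : ℕ → ℝ,
        lpSeqNorm p (fun n => y n * z n) ≤ ENNReal.ofReal C * (tlNorm p y * gNorm p z)) ∧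
      (∀ x : ℕ → ℝ, lpSeqNorm p x < ⊤ →
        ∃ y z : ℕ → ℝ, (∀ n, x n = y n * z n) ∧
          tlNorm p y * gNorm p z ≤ ENNReal.ofReal C * lpSeqNorm p x) := by
  have hp0 : 0 < p := one_pos.trans_le hp
  have h4 : (4 : ℝ≥0∞) ^ (1 / p) ≤ ENNReal.ofReal 4 := by
    simpa using ENNReal.rpow_le_rpow_of_exponent_le (by norm_num : (1 : ℝ≥0∞) ≤ 4)
      ((div_le_one hp0).2 hp)
  refine ⟨4, by norm_num, fun y z => ?_, fun x hx => ?_⟩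
  · exact (lpSeqNorm_mul_le_tlNorm_mul_gNorm hp0 y z).trans (le_mul_of_one_le_left' (by simp))
  · obtain ⟨y, z, hxyz, hle⟩ := exists_mul_eq_tlNorm_mul_gNorm_le hp0 hx.ne
    exact ⟨y, z, hxyz, hle.trans (by gcongr)⟩
end
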